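/- Let G be a finite abstract simplicial complex. Then Gauss–Bonnet holds for the sphere curvature k(x) = ω(x)·(1 - χ(S(x))): ∑_{x∈G} ω(x)·(1 - χ(S(x))) = χ(G), where S(x) is the unit sphere of x. -/

import Mathlib

open Finset BigOperators

variable {α : Type*} [DecidableEq α]

/-- A finite abstract simplicial complex: a finite collection of nonempty finite
sets closed under taking nonempty subsets. -/
def IsComplex (G : Finset (Finset α)) : Prop :=
  (∀ x ∈ G, x.Nonempty) ∧ ∀ x ∈ G, ∀ y : Finset α, y.Nonempty → y ⊆ x → y ∈ G

/-- ω(x) = (-1)^(|x|-1). -/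
def omegaS (x : Finset α) : ℤ := (-1) ^ (x.card - 1)

/-- Euler characteristic χ(G) = ∑_{x∈G} ω(x). -/
def chi (G : Finset (Finset α)) : ℤ := ∑ x ∈ G, omegaS x

/-- The nonempty chains (subsets totally ordered by inclusion) of a finite
collection of finite sets. -/
def chainsOf (S : Finset (Finset α)) : Finset (Finset (Finset α)) :=
  S.powerset.filter (fun C => C.Nonempty ∧ ∀ a ∈ C, ∀ b ∈ C, a ⊆ b ∨ b ⊆ a)

/-- Euler characteristic of the simplicial complex whose simplices are the
nonempty chains in S: ∑_C (-1)^(|C|-1). -/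
def chiChains (S : Finset (Finset α)) : ℤ :=
  ∑ C ∈ chainsOf S, (-1) ^ (C.card - 1)

/-- The unit sphere of x in G: all simplices strictly contained in x or
strictly containing x. -/
def sphere (G : Finset (Finset α)) (x : Finset α) : Finset (Finset α) :=
  G.filter (fun y => y ⊂ x ∨ x ⊂ y)

/-!
Write `χ̂(S) = ∑ (-1)^|C|` over all chains `C` of `S`, the empty chain included, so that
`χ̂(S) = 1 - χ` of the complex of nonempty chains of `S`. The unit sphere `S(x)` is the join of
the proper faces of `x` and the simplices above `x`, and `χ̂` is multiplicative on joins. On the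
proper faces of a simplex, `χ̂ = ω(x)`: sorting chains by their top element gives the recursion
`χ̂(S) = 1 - ∑_{m ∈ S} χ̂(S_{<m})`, and the alternating sum over subsets of `x` vanishes. Since
`ω(x)² = 1`, the curvature `ω(x)(1 - χ(S(x)))` is `χ̂(G_{>x})`. Sorting chains by their bottom
element instead gives `χ̂(G) = 1 - ∑_x χ̂(G_{>x})`, so `∑_x χ̂(G_{>x}) = ∑_x χ̂(G_{<x}) = ∑_x ω(x)`.
-/

section Chains

variable {β : Type*} (r : β → β → Prop)

open Classical in
noncomputable def chains (S : Finset β) : Finset (Finset β) :=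
  {C ∈ S.powerset | IsChain r (C : Set β)}

noncomputable def signedChainCount (S : Finset β) : ℤ :=
  ∑ C ∈ chains r S, (-1) ^ #C

variable {r}

lemma mem_chains {S C : Finset β} : C ∈ chains r S ↔ C ⊆ S ∧ IsChain r (C : Set β) := by
  simp [chains]

lemma empty_mem_chains (S : Finset β) : ∅ ∈ chains r S := by
  simp [mem_chains]

lemma chains_swap (S : Finset β) : chains (Function.swap r) S = chains r S := by
  ext C
  simp only [mem_chains]
  exact and_congr_right fun _ => ⟨IsChain.symm, IsChain.symm⟩

lemma signedChainCount_swap (S : Finset β) :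
    signedChainCount (Function.swap r) S = signedChainCount r S := by
  rw [signedChainCount, chains_swap, signedChainCount]

lemma IsChain.exists_greatest [IsTrans β r] {C : Finset β} (hC : C.Nonempty)
    (hch : IsChain r (C : Set β)) : ∃ m ∈ C, ∀ a ∈ C, a ≠ m → r a m := by
  classical
  induction C using Finset.induction with
  | empty => simp at hC
  | insert b s hb ih =>
    rcases s.eq_empty_or_nonempty with rfl | hs
    · exact ⟨b, by simp, by simp⟩
    rw [coe_insert] at hch
    obtain ⟨m, hm, hmax⟩ := ih hs (hch.mono (Set.subset_insert _ _))
    have hbm : b ≠ m := fun h => hb (h ▸ hm)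
    rcases hch (Set.mem_insert _ _) (Set.mem_insert_of_mem _ hm) hbm with hbm' | hmb
    · refine ⟨m, mem_insert_of_mem hm, fun a ha ham => ?_⟩
      rcases mem_insert.1 ha with rfl | ha
      · exact hbm'
      · exact hmax a ha ham
    · refine ⟨b, mem_insert_self _ _, fun a ha hab => ?_⟩
      rcases mem_insert.1 ha with rfl | ha
      · exact absurd rfl hab
      by_cases ham : a = m
      · exact ham ▸ hmb
      · exact _root_.trans (hmax a ha ham) hmb

lemma sum_chains_erase_empty [DecidableEq β] [DecidableRel r] [IsTrans β r] [Std.Irrefl r]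
    (S : Finset β) (f : Finset β → ℤ) :
    ∑ C ∈ (chains r S).erase ∅, f C
      = ∑ m ∈ S, ∑ A ∈ chains r {a ∈ S | r a m}, f (insert m A) := by
  rw [← sum_sigma S (fun m => chains r {a ∈ S | r a m}) (fun p => f (insert p.1 p.2))]
  refine (sum_bij (fun p _ => insert p.1 p.2) ?_ ?_ ?_ fun _ _ => rfl).symm
  · rintro ⟨m, A⟩ hp
    obtain ⟨hm, hA⟩ := mem_sigma.1 hp
    obtain ⟨hAS, hAch⟩ := mem_chains.1 hA
    refine mem_erase.2 ⟨insert_ne_empty _ _, mem_chains.2 ⟨insert_subset hm ?_, ?_⟩⟩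
    · exact hAS.trans (filter_subset _ _)
    · rw [coe_insert]
      exact hAch.insert fun a ha _ => .inr (mem_filter.1 (hAS ha)).2
  · have below : ∀ p ∈ S.sigma fun m => chains r {a ∈ S | r a m}, ∀ a ∈ p.2, r a p.1 :=
      fun p hp a ha => (mem_filter.1 ((mem_chains.1 (mem_sigma.1 hp).2).1 ha)).2
    rintro ⟨m, A⟩ hp ⟨m', A'⟩ hp' h
    have hmA : m ∉ A := fun hm => irrefl m (below _ hp m hm)
    have hmA' : m' ∉ A' := fun hm => irrefl m' (below _ hp' m' hm)
    obtain rfl : m = m' := by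
      by_contra hne
      have h₁ : r m m' :=
        below _ hp' m ((mem_insert.1 (h ▸ mem_insert_self m A)).resolve_left hne)
      have h₂ : r m' m :=
        below _ hp m' ((mem_insert.1 (h ▸ mem_insert_self m' A')).resolve_left (Ne.symm hne))
      exact irrefl m (_root_.trans h₁ h₂)
    have := congrArg (·.erase m) h
    simp only [erase_insert hmA, erase_insert hmA'] at this
    rw [this]
  · intro C hC
    obtain ⟨hCne, hC⟩ := mem_erase.1 hC
    obtain ⟨hCS, hCch⟩ := mem_chains.1 hC
    obtain ⟨m, hm, hmax⟩ := hCch.exists_greatest (nonempty_iff_ne_empty.2 hCne)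
    refine ⟨⟨m, C.erase m⟩, mem_sigma.2 ⟨hCS hm, mem_chains.2 ⟨fun a ha => ?_, ?_⟩⟩,
      insert_erase hm⟩
    · obtain ⟨ham, ha⟩ := mem_erase.1 ha
      exact mem_filter.2 ⟨hCS ha, hmax a ha ham⟩
    · exact hCch.mono (coe_subset.2 (erase_subset _ _))

lemma signedChainCount_eq_one_sub_sum [DecidableRel r] [IsTrans β r] [Std.Irrefl r]
    (S : Finset β) :
    signedChainCount r S = 1 - ∑ m ∈ S, signedChainCount r {a ∈ S | r a m} := by
  classical
  have hinsert : ∀ m ∈ S, ∀ A ∈ chains r {a ∈ S | r a m},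
      (-1 : ℤ) ^ #(insert m A) = -(-1) ^ #A :=
    fun m _ A hA => by
      have hmA : m ∉ A := fun hm => irrefl m (mem_filter.1 ((mem_chains.1 hA).1 hm)).2
      rw [card_insert_of_notMem hmA, pow_succ, mul_neg_one]
  rw [signedChainCount, ← add_sum_erase _ _ (empty_mem_chains S), sum_chains_erase_empty,
    sum_congr rfl fun m hm => sum_congr rfl (hinsert m hm)]
  simp only [card_empty, pow_zero, sum_neg_distrib, signedChainCount]
  ring

lemma sum_signedChainCount_above_eq_below [DecidableRel r] [IsTrans β r] [Std.Irrefl r]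
    (S : Finset β) :
    ∑ m ∈ S, signedChainCount r {a ∈ S | r m a}
      = ∑ m ∈ S, signedChainCount r {a ∈ S | r a m} := by
  have hbelow := signedChainCount_eq_one_sub_sum (r := r) S
  have habove := signedChainCount_eq_one_sub_sum (r := Function.swap r) S
  simp only [signedChainCount_swap, Function.swap] at habove
  linarith

lemma signedChainCount_union [DecidableEq β] [Std.Irrefl r] {S T : Finset β}
    (hST : ∀ a ∈ S, ∀ b ∈ T, r a b) :
    signedChainCount r (S ∪ T) = signedChainCount r S * signedChainCount r T := by
  have hdisj : Disjoint S T :=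
    disjoint_left.2 fun a haS haT => irrefl a (hST a haS a haT)
  rw [signedChainCount, signedChainCount, signedChainCount, sum_mul_sum, ← sum_product']
  refine (sum_bij (fun p _ => p.1 ∪ p.2) ?_ ?_ ?_ ?_).symm
  · rintro ⟨A, B⟩ hp
    obtain ⟨hA, hB⟩ := mem_product.1 hp
    obtain ⟨hAS, hAch⟩ := mem_chains.1 hA
    obtain ⟨hBT, hBch⟩ := mem_chains.1 hB
    refine mem_chains.2 ⟨union_subset_union hAS hBT, ?_⟩
    rw [coe_union, isChain_union]
    exact ⟨hAch, hBch, fun a ha b hb _ => .inl (hST a (hAS ha) b (hBT hb))⟩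
  · have hsplit : ∀ A ⊆ S, ∀ B ⊆ T, (A ∪ B) ∩ S = A ∧ (A ∪ B) ∩ T = B := by
      intro A hA B hB
      have hAT : A ∩ T = ∅ := disjoint_iff_inter_eq_empty.1 (hdisj.mono_left hA)
      have hBS : B ∩ S = ∅ := disjoint_iff_inter_eq_empty.1 (hdisj.symm.mono_left hB)
      rw [union_inter_distrib_right, union_inter_distrib_right, inter_eq_left.2 hA,
        inter_eq_left.2 hB, hAT, hBS, union_empty, empty_union]
      exact ⟨rfl, rfl⟩
    rintro ⟨A, B⟩ hp ⟨A', B'⟩ hp' (h : A ∪ B = A' ∪ B')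
    obtain ⟨hA, hB⟩ := mem_product.1 hp
    obtain ⟨hA', hB'⟩ := mem_product.1 hp'
    obtain ⟨hAS, hBT⟩ := hsplit A (mem_chains.1 hA).1 B (mem_chains.1 hB).1
    obtain ⟨hA'S, hB'T⟩ := hsplit A' (mem_chains.1 hA').1 B' (mem_chains.1 hB').1
    exact Prod.ext (by rw [← hAS, h, hA'S]) (by rw [← hBT, h, hB'T])
  · intro C hC
    obtain ⟨hCST, hCch⟩ := mem_chains.1 hC
    refine ⟨(C ∩ S, C ∩ T), mem_product.2 ⟨mem_chains.2 ⟨inter_subset_right, ?_⟩,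
      mem_chains.2 ⟨inter_subset_right, ?_⟩⟩, ?_⟩
    · exact hCch.mono (coe_subset.2 inter_subset_left)
    · exact hCch.mono (coe_subset.2 inter_subset_left)
    · rw [← inter_union_distrib_left, inter_eq_left.2 hCST]
  · rintro ⟨A, B⟩ hp
    obtain ⟨hA, hB⟩ := mem_product.1 hp
    rw [card_union_of_disjoint
      ((hdisj.mono_left (mem_chains.1 hA).1).mono_right (mem_chains.1 hB).1), pow_add]

end Chains

lemma isChain_ssubset_iff {C : Finset (Finset α)} :
    IsChain (· ⊂ ·) (C : Set (Finset α)) ↔ ∀ a ∈ C, ∀ b ∈ C, a ⊆ b ∨ b ⊆ a := by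
  refine ⟨fun h a ha b hb => ?_, fun h a ha b hb hab => ?_⟩
  · by_cases hab : a = b
    · exact .inl hab.le
    · exact (h ha hb hab).imp (·.subset) (·.subset)
  · exact (h a ha b hb).imp (ssubset_of_subset_of_ne · hab) (ssubset_of_subset_of_ne · hab.symm)

lemma chainsOf_eq_erase_empty (S : Finset (Finset α)) :
    chainsOf S = (chains (· ⊂ ·) S).erase ∅ := by
  ext C
  simp only [chainsOf, mem_filter, mem_powerset, mem_erase, mem_chains, isChain_ssubset_iff,
    nonempty_iff_ne_empty]
  tauto

lemma omegaS_eq_neg_neg_one_pow {γ : Type*} {x : Finset γ} (hx : x.Nonempty) :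
    omegaS x = -(-1) ^ #x := by
  rw [omegaS, ← Nat.sub_add_cancel (card_pos.2 hx), pow_succ]
  simp

lemma omegaS_mul_self {γ : Type*} (x : Finset γ) : omegaS x * omegaS x = 1 := by
  rw [omegaS, ← mul_pow, neg_one_mul, neg_neg, one_pow]

lemma one_sub_chiChains (S : Finset (Finset α)) :
    1 - chiChains S = signedChainCount (· ⊂ ·) S := by
  rw [signedChainCount, ← add_sum_erase _ _ (empty_mem_chains S), ← chainsOf_eq_erase_empty,
    chiChains, card_empty, pow_zero, sub_eq_add_neg, ← sum_neg_distrib]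
  refine congrArg _ (sum_congr rfl fun C hC => ?_)
  rw [← omegaS, omegaS_eq_neg_neg_one_pow (mem_filter.1 hC).2.1, neg_neg]

lemma filter_ssubset_ssubsets_erase_empty {x m : Finset α} (hm : m ⊂ x) :
    {a ∈ x.ssubsets.erase ∅ | a ⊂ m} = m.ssubsets.erase ∅ := by
  ext a
  simp only [mem_filter, mem_erase, mem_ssubsets]
  exact ⟨fun ⟨⟨ha, _⟩, ham⟩ => ⟨ha, ham⟩, fun ⟨ha, ham⟩ => ⟨⟨ha, ham.trans hm⟩, ham⟩⟩

lemma sum_omegaS_ssubsets_erase_empty {x : Finset α} (hx : x.Nonempty) :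
    ∑ m ∈ x.ssubsets.erase ∅, omegaS m = 1 - omegaS x := by
  have hsplit : ∑ m ∈ x.powerset, (-1 : ℤ) ^ #m
      = (-1) ^ #x + (1 + ∑ m ∈ x.ssubsets.erase ∅, (-1) ^ #m) := by
    rw [← add_sum_erase _ _ (mem_powerset_self x)]
    change _ + ∑ m ∈ x.ssubsets, _ = _
    rw [← add_sum_erase _ _ (empty_mem_ssubsets hx), card_empty, pow_zero]
  have hω : ∑ m ∈ x.ssubsets.erase ∅, omegaS m = -∑ m ∈ x.ssubsets.erase ∅, (-1) ^ #m := by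
    rw [← sum_neg_distrib]
    refine sum_congr rfl fun m hm => omegaS_eq_neg_neg_one_pow ?_
    exact nonempty_iff_ne_empty.2 (ne_of_mem_erase hm)
  rw [hω, omegaS_eq_neg_neg_one_pow hx]
  linarith [sum_powerset_neg_one_pow_card_of_nonempty hx]

lemma signedChainCount_ssubsets_erase_empty {x : Finset α} (hx : x.Nonempty) :
    signedChainCount (· ⊂ ·) (x.ssubsets.erase ∅) = omegaS x := by
  induction x using Finset.strongInduction with
  | H x ih =>
  have hbelow : ∀ m ∈ x.ssubsets.erase ∅,
      signedChainCount (· ⊂ ·) {a ∈ x.ssubsets.erase ∅ | a ⊂ m} = omegaS m := by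
    intro m hm
    obtain ⟨hm_ne, hmx⟩ := mem_erase.1 hm
    rw [mem_ssubsets] at hmx
    rw [filter_ssubset_ssubsets_erase_empty hmx, ih m hmx (nonempty_iff_ne_empty.2 hm_ne)]
  rw [signedChainCount_eq_one_sub_sum, sum_congr rfl hbelow, sum_omegaS_ssubsets_erase_empty hx,
    sub_sub_cancel]

lemma IsComplex.filter_ssubset {G : Finset (Finset α)} (hG : IsComplex G) {x : Finset α}
    (hx : x ∈ G) : {y ∈ G | y ⊂ x} = x.ssubsets.erase ∅ := by
  ext y
  simp only [mem_filter, mem_erase, mem_ssubsets, ← nonempty_iff_ne_empty]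
  exact ⟨fun ⟨hy, hyx⟩ => ⟨hG.1 y hy, hyx⟩, fun ⟨hy, hyx⟩ => ⟨hG.2 x hx y hy hyx.subset, hyx⟩⟩

lemma sphere_eq_union (G : Finset (Finset α)) (x : Finset α) :
    sphere G x = {y ∈ G | y ⊂ x} ∪ {y ∈ G | x ⊂ y} :=
  filter_or _ _ _

lemma IsComplex.omegaS_mul_one_sub_chiChains_sphere {G : Finset (Finset α)} (hG : IsComplex G)
    {x : Finset α} (hx : x ∈ G) :
    omegaS x * (1 - chiChains (sphere G x)) = signedChainCount (· ⊂ ·) {y ∈ G | x ⊂ y} := by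
  have hjoin : ∀ a ∈ {y ∈ G | y ⊂ x}, ∀ b ∈ {y ∈ G | x ⊂ y}, a ⊂ b :=
    fun a ha b hb => (mem_filter.1 ha).2.trans (mem_filter.1 hb).2
  rw [one_sub_chiChains, sphere_eq_union, signedChainCount_union hjoin, hG.filter_ssubset hx,
    signedChainCount_ssubsets_erase_empty (hG.1 x hx), ← mul_assoc, omegaS_mul_self, one_mul]

/-- Sphere Gauss–Bonnet: ∑_{x∈G} ω(x)·(1 - χ(S(x))) = χ(G). -/
theorem sphere_gauss_bonnet (G : Finset (Finset α)) (hG : IsComplex G) :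
    ∑ x ∈ G, omegaS x * (1 - chiChains (sphere G x)) = chi G := by
  calc ∑ x ∈ G, omegaS x * (1 - chiChains (sphere G x))
      = ∑ x ∈ G, signedChainCount (· ⊂ ·) {y ∈ G | x ⊂ y} :=
        sum_congr rfl fun x hx => hG.omegaS_mul_one_sub_chiChains_sphere hx
    _ = ∑ x ∈ G, signedChainCount (· ⊂ ·) {y ∈ G | y ⊂ x} :=
        sum_signedChainCount_above_eq_below G
    _ = chi G := sum_congr rfl fun x hx => by
        rw [hG.filter_ssubset hx, signedChainCount_ssubsets_erase_empty (hG.1 x hx)]
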